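/- arXiv:1504.06783 — 3 statements merged into one kernel-verified Lean document; each statement's English description precedes it below -/
import Mathlib

section
/- For every integer n and every finitely generated module M over a commutative Noetherian ring R, there exists a largest R-submodule M_n of M with dim_R M_n ≤ n (where dim of the zero module is -∞). -/
open IsLocalRing

/-- The (Krull) dimension of a module: `dim_R M = dim (R / ann_R M)`;
the zero module has dimension `⊥` (i.e. `-∞`). -/
noncomputable def moduleDim (R : Type*) [CommRing R] (M : Type*) [AddCommGroup M]
    [Module R M] : WithBot ℕ∞ :=
  ringKrullDim (R ⧸ Module.annihilator R M)

/-- `dimLe d n` means `d ≤ n` where `n : ℤ` and `d` is a dimension in `WithBot ℕ∞`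
(so for `n < 0` this means `d = ⊥`, i.e. the module is zero). -/
def dimLe (d : WithBot ℕ∞) (n : ℤ) : Prop :=
  if 0 ≤ n then d ≤ ((n.toNat : ℕ∞) : WithBot ℕ∞) else d = ⊥

/-- The depth of a module over a Noetherian local ring: the supremum of lengths of
regular sequences on `M` contained in the maximal ideal. -/
noncomputable def moduleDepth (R : Type*) [CommRing R] [IsLocalRing R] (M : Type*)
    [AddCommGroup M] [Module R M] : ℕ∞ :=
  sSup {n : ℕ∞ | ∃ rs : List R, (rs.length : ℕ∞) = n ∧
    (∀ r ∈ rs, r ∈ maximalIdeal R) ∧ RingTheory.Sequence.IsRegular M rs}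

/-- A module over a Noetherian local ring is Cohen-Macaulay if it is zero or
`depth M = dim M`. -/
def IsCMModule (R : Type*) [CommRing R] [IsLocalRing R] (M : Type*) [AddCommGroup M]
    [Module R M] : Prop :=
  Nontrivial M → (moduleDepth R M : WithBot ℕ∞) = moduleDim R M

/-- A module over a (not necessarily local) commutative ring is Cohen-Macaulay if all its
localizations at primes are Cohen-Macaulay. -/
def IsCMModuleGen (R : Type*) [CommRing R] (M : Type*) [AddCommGroup M] [Module R M] : Prop :=
  ∀ (P : Ideal R) [P.IsPrime],
    IsCMModule (Localization.AtPrime P) (LocalizedModule P.primeCompl M)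

/-- `D : Fin (ℓ+1) → Submodule R M` is the dimension filtration of `M`:
`D 0 = 0`, `D ℓ = M`, the chain is strictly increasing, each `D i` (for `i ≥ 1`) is the
largest submodule of its dimension, and every nonzero submodule which is largest among
submodules of dimension at most its own dimension occurs in the chain. -/
def IsDimFiltration (R : Type*) [CommRing R] (M : Type*) [AddCommGroup M] [Module R M]
    (ℓ : ℕ) (D : Fin (ℓ + 1) → Submodule R M) : Prop :=
  D 0 = ⊥ ∧ D (Fin.last ℓ) = ⊤ ∧ StrictMono D ∧
  (∀ i : Fin ℓ, IsGreatest
    {N : Submodule R M | moduleDim R ↥N ≤ moduleDim R ↥(D i.succ)} (D i.succ)) ∧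
  (∀ N : Submodule R M, N ≠ ⊥ →
    IsGreatest {N' : Submodule R M | moduleDim R ↥N' ≤ moduleDim R ↥N} N → ∃ i, D i = N)

/-- A module over a local ring is sequentially Cohen-Macaulay if the consecutive quotients
of its dimension filtration are Cohen-Macaulay. -/
def IsSeqCM (R : Type*) [CommRing R] [IsLocalRing R] (M : Type*) [AddCommGroup M]
    [Module R M] : Prop :=
  ∃ (ℓ : ℕ) (D : Fin (ℓ + 1) → Submodule R M), IsDimFiltration R M ℓ D ∧
    ∀ i : Fin ℓ, IsCMModule R
      (↥(D i.succ) ⧸ (D i.castSucc).comap (D i.succ).subtype)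

/-- Sequentially Cohen-Macaulay over a not necessarily local ring. -/
def IsSeqCMGen (R : Type*) [CommRing R] (M : Type*) [AddCommGroup M] [Module R M] : Prop :=
  ∃ (ℓ : ℕ) (D : Fin (ℓ + 1) → Submodule R M), IsDimFiltration R M ℓ D ∧
    ∀ i : Fin ℓ, IsCMModuleGen R
      (↥(D i.succ) ⧸ (D i.castSucc).comap (D i.succ).subtype)

/-- A local ring is sequentially Cohen-Macaulay if it is so as a module over itself. -/
def IsSeqCMRing (R : Type*) [CommRing R] [IsLocalRing R] : Prop := IsSeqCM R R

/-!
The annihilator of `N ⊔ P` is `ann N ⊓ ann P`, and `V(I ⊓ J) = V(I) ∪ V(J)`. A chain of primes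
in a union of two closed subsets of `Spec R` lies entirely in the one containing its smallest
member, so `dim (N ⊔ P) = max (dim N) (dim P)`. Hence the submodules of dimension at most `n`
form a nonempty sup-closed family, which contains its supremum because `M` is Noetherian.
-/

namespace Order

theorem krullDim_union_of_isUpperSet {α : Type*} [Preorder α] {s t : Set α}
    (hs : IsUpperSet s) (ht : IsUpperSet t) :
    krullDim ↥(s ∪ t) = max (krullDim s) (krullDim t) := by
  have length_le {u : Set α} (hu : IsUpperSet u) (p : LTSeries ↥(s ∪ t))
      (hp : (p.head : α) ∈ u) : (p.length : WithBot ℕ∞) ≤ krullDim u :=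
    LTSeries.length_le_krullDim ⟨p.length, fun i => ⟨p i, hu (p.head_le i) hp⟩, p.step⟩
  refine le_antisymm (iSup_le fun p => ?_) (max_le ?_ ?_)
  · rcases p.head.2 with hs' | ht'
    · exact (length_le hs p hs').trans (le_max_left _ _)
    · exact (length_le ht p ht').trans (le_max_right _ _)
  · exact krullDim_le_of_strictMono (Set.inclusion Set.subset_union_left) fun _ _ h => h
  · exact krullDim_le_of_strictMono (Set.inclusion Set.subset_union_right) fun _ _ h => h

end Order

theorem ringKrullDim_quotient_inf {R : Type*} [CommRing R] (I J : Ideal R) :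
    ringKrullDim (R ⧸ (I ⊓ J)) = max (ringKrullDim (R ⧸ I)) (ringKrullDim (R ⧸ J)) := by
  have isUpperSet_zeroLocus (K : Ideal R) : IsUpperSet (PrimeSpectrum.zeroLocus (K : Set R)) :=
    fun _ _ hpq hp => (PrimeSpectrum.mem_zeroLocus _ _).2
      (((PrimeSpectrum.mem_zeroLocus _ _).1 hp).trans hpq)
  rw [ringKrullDim_quotient, ringKrullDim_quotient, ringKrullDim_quotient,
    PrimeSpectrum.zeroLocus_inf,
    Order.krullDim_union_of_isUpperSet (isUpperSet_zeroLocus I) (isUpperSet_zeroLocus J)]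

section moduleDim

variable {R : Type*} [CommRing R] {M : Type*} [AddCommGroup M] [Module R M]

theorem moduleDim_eq_bot_of_subsingleton [Subsingleton M] : moduleDim R M = ⊥ := by
  have : Subsingleton (R ⧸ Module.annihilator R M) := by
    rw [Ideal.Quotient.subsingleton_iff, Module.annihilator_eq_top_iff]
    infer_instance
  exact ringKrullDim_eq_bot_of_subsingleton

namespace Submodule

theorem moduleDim_sup (N P : Submodule R M) :
    moduleDim R ↥(N ⊔ P) = max (moduleDim R N) (moduleDim R P) := by
  change ringKrullDim (R ⧸ (N ⊔ P).annihilator) =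
    max (ringKrullDim (R ⧸ N.annihilator)) (ringKrullDim (R ⧸ P.annihilator))
  rw [annihilator_sup, ringKrullDim_quotient_inf]

theorem supClosed_setOf_moduleDim_le (c : WithBot ℕ∞) :
    SupClosed {N : Submodule R M | moduleDim R N ≤ c} := fun N hN P hP =>
  (moduleDim_sup N P).trans_le (max_le hN hP)

theorem exists_isGreatest_setOf_moduleDim_le [IsNoetherian R M] (c : WithBot ℕ∞) :
    ∃ Mc : Submodule R M, IsGreatest {N : Submodule R M | moduleDim R N ≤ c} Mc := by
  have bot_mem : (⊥ : Submodule R M) ∈ {N : Submodule R M | moduleDim R N ≤ c} :=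
    moduleDim_eq_bot_of_subsingleton.trans_le bot_le
  exact ⟨_, (CompleteLattice.isSupClosedCompact_iff_wellFoundedGT _).mpr inferInstance _
    ⟨⊥, bot_mem⟩ (supClosed_setOf_moduleDim_le c), fun _ hN => le_sSup hN⟩

end Submodule

end moduleDim

theorem dimLe_iff_le {d : WithBot ℕ∞} {n : ℤ} :
    dimLe d n ↔ d ≤ if 0 ≤ n then ((n.toNat : ℕ∞) : WithBot ℕ∞) else ⊥ := by
  unfold dimLe
  split_ifs <;> simp

/-- For every integer `n` and every finitely generated module `M` over a
commutative Noetherian ring `R`, there exists a largest `R`-submodule `Mₙ` of `M` with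
`dim_R Mₙ ≤ n`. -/
theorem stmt0 (R : Type*) [CommRing R] [IsNoetherianRing R]
    (M : Type*) [AddCommGroup M] [Module R M] [Module.Finite R M] (n : ℤ) :
    ∃ Mn : Submodule R M,
      IsGreatest {N : Submodule R M | dimLe (moduleDim R ↥N) n} Mn := by
  simp_rw [dimLe_iff_le]
  exact Submodule.exists_isGreatest_setOf_moduleDim_le _
end

section
/- The set S(M) = {dim_R N : N a nonzero submodule of M} equals {dim R/p : p ∈ Ass_R M}, for a nonzero finitely generated module M over a Noetherian ring R. -/
open IsLocalRing

/-!
The dimension of a nonzero finitely generated module `N` is `dim R/ann N`, the maximum of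
`dim R/p` over the finitely many minimal primes `p` of `ann N`; these minimal primes are
associated primes of `N`, hence of `M` when `N ⊆ M`. Conversely an associated prime `p` is
the annihilator of some `x ∈ M`, and then `Rx ≅ R/p` has dimension `dim R/p`.
-/

section

variable {R : Type*} [CommRing R]

/-- Every chain of primes containing `I` starts above some minimal prime of `I`. -/
theorem Ideal.ringKrullDim_quotient_le_of_forall_minimalPrimes {I : Ideal R} {n : WithBot ℕ∞}
    (h : ∀ p ∈ I.minimalPrimes, ringKrullDim (R ⧸ p) ≤ n) :
    ringKrullDim (R ⧸ I) ≤ n := by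
  rw [ringKrullDim_quotient, Order.krullDim]
  refine iSup_le fun c => ?_
  obtain ⟨q, hq, hqc⟩ := Ideal.exists_minimalPrimes_le (J := c.head.1.asIdeal) c.head.2
  let c' : LTSeries (PrimeSpectrum.zeroLocus (R := R) q) :=
    .mk c.length (fun i => ⟨c i, hqc.trans (c.monotone (Fin.zero_le i))⟩)
      fun _ _ hij => c.strictMono hij
  calc (c.length : WithBot ℕ∞) = c'.length := rfl
    _ ≤ Order.krullDim (PrimeSpectrum.zeroLocus (R := R) q) :=
      Order.LTSeries.length_le_krullDim c'
    _ = ringKrullDim (R ⧸ q) := (ringKrullDim_quotient q).symm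
    _ ≤ n := h q hq

theorem Ideal.exists_mem_minimalPrimes_ringKrullDim_quotient_eq [IsNoetherianRing R]
    {I : Ideal R} (hI : I ≠ ⊤) :
    ∃ p ∈ I.minimalPrimes, ringKrullDim (R ⧸ p) = ringKrullDim (R ⧸ I) := by
  obtain ⟨p, hp, hmax⟩ := I.finite_minimalPrimes_of_isNoetherianRing.exists_maximalFor
    (fun p => ringKrullDim (R ⧸ p)) _ (Set.nonempty_coe_sort.mp (I.nonempty_minimalPrimes hI))
  refine ⟨p, hp, le_antisymm ?_ ?_⟩
  · exact ringKrullDim_le_of_surjective _ (Ideal.Quotient.factor_surjective hp.1.2)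
  · exact ringKrullDim_quotient_le_of_forall_minimalPrimes fun q hq =>
      le_of_not_gt fun hlt => hlt.not_ge (hmax hq hlt.le)

variable {M : Type*} [AddCommGroup M] [Module R M]

variable (R M) in
theorem exists_mem_associatedPrimes_ringKrullDim_quotient_eq_moduleDim [IsNoetherianRing R]
    [Module.Finite R M] [Nontrivial M] :
    ∃ p ∈ associatedPrimes R M, ringKrullDim (R ⧸ p) = moduleDim R M := by
  obtain ⟨p, hp, hdim⟩ := Ideal.exists_mem_minimalPrimes_ringKrullDim_quotient_eq
    (I := Module.annihilator R M) (mt Module.annihilator_eq_top_iff.mp (not_subsingleton M))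
  exact ⟨p, Module.associatedPrimes.minimalPrimes_annihilator_subset_associatedPrimes R M hp,
    hdim⟩

theorem IsAssociatedPrime.exists_ne_bot_moduleDim_eq [IsNoetherianRing R] {p : Ideal R}
    (hp : IsAssociatedPrime p M) :
    ∃ N : Submodule R M, N ≠ ⊥ ∧ moduleDim R N = ringKrullDim (R ⧸ p) := by
  obtain ⟨hpP, x, hx⟩ := isAssociatedPrime_iff.mp hp
  rw [Submodule.bot_colon'] at hx
  refine ⟨Submodule.span R {x}, fun hbot => hpP.ne_top ?_, hx ▸ rfl⟩
  rw [hx, hbot, Submodule.annihilator_bot]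

end

theorem stmt2_general (R : Type*) [CommRing R] [IsNoetherianRing R]
    (M : Type*) [AddCommGroup M] [Module R M] [Module.Finite R M] :
    {d : WithBot ℕ∞ | ∃ N : Submodule R M, N ≠ ⊥ ∧ moduleDim R ↥N = d} =
      {d : WithBot ℕ∞ | ∃ p ∈ associatedPrimes R M, ringKrullDim (R ⧸ p) = d} := by
  ext d
  constructor
  · rintro ⟨N, hN, rfl⟩
    have : Nontrivial N := Submodule.nontrivial_iff_ne_bot.mpr hN
    obtain ⟨p, hp, hdim⟩ := exists_mem_associatedPrimes_ringKrullDim_quotient_eq_moduleDim R N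
    exact ⟨p, associatedPrimes.subset_of_injective N.injective_subtype hp, hdim⟩
  · rintro ⟨p, hp, rfl⟩
    exact IsAssociatedPrime.exists_ne_bot_moduleDim_eq hp

/-- `S(M) = {dim_R N : N a nonzero submodule of M} = {dim R/p : p ∈ Ass_R M}`. -/
theorem stmt2 (R : Type*) [CommRing R] [IsNoetherianRing R]
    (M : Type*) [AddCommGroup M] [Module R M] [Module.Finite R M] [Nontrivial M] :
    {d : WithBot ℕ∞ | ∃ N : Submodule R M, N ≠ ⊥ ∧ moduleDim R ↥N = d} =
      {d : WithBot ℕ∞ | ∃ p ∈ associatedPrimes R M, ringKrullDim (R ⧸ p) = d} :=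
  stmt2_general R M
end

section
/- Let M be a nonzero finitely generated module over a Noetherian ring R, with a primary decomposition 0 = ∩_{p ∈ Ass_R M} M(p), where M(p) is p-primary in M. Then for each i, the term D_i of the dimension filtration with i < ℓ satisfies D_i = ∩_{p ∈ Ass_R M, dim R/p > d_i} M(p). -/
open IsLocalRing

/-- `Q` is a `p`-primary submodule of `M`, i.e. `Ass_R (M/Q) = {p}`. -/
def IsPrimarySubmodule {R : Type*} [CommRing R] {M : Type*} [AddCommGroup M] [Module R M]
    (Q : Submodule R M) (p : Ideal R) : Prop :=
  associatedPrimes R (M ⧸ Q) = {p}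

/-!
If `d_i < dim R/p`, then `D_i ⊆ M(p)`: otherwise the image of `D_i` in `M ⧸ M(p)` is nonzero,
so its only possible associated prime `p` has `dim R/p ≤ dim D_i`. Conversely, the intersection
`N` of these `M(p)` meets the intersection of the remaining components in `0`, hence embeds into
the quotient of `M` by the latter, and every associated prime `q` of `N` is one of the remaining
primes, with `dim R/q ≤ d_i`. Minimal primes of `ann N` are associated, so `dim N ≤ d_i`, and the
maximality of `D_i` gives `N ⊆ D_i`.
-/

section KrullDimension

variable {R : Type*} [CommRing R]

theorem ringKrullDim_quotient_le_of_le {I J : Ideal R} (h : I ≤ J) :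
    ringKrullDim (R ⧸ J) ≤ ringKrullDim (R ⧸ I) :=
  ringKrullDim_le_of_surjective _ (Ideal.Quotient.factor_surjective h)

theorem ringKrullDim_quotient_le_of_forall_mem_minimalPrimes (I : Ideal R) {c : WithBot ℕ∞}
    (h : ∀ p ∈ I.minimalPrimes, ringKrullDim (R ⧸ p) ≤ c) : ringKrullDim (R ⧸ I) ≤ c := by
  rw [ringKrullDim_quotient, Order.krullDim]
  refine iSup_le fun l => ?_
  obtain ⟨p, hp, hpl⟩ := Ideal.exists_minimalPrimes_le (J := l.head.1.asIdeal) l.head.2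
  let l' : LTSeries (PrimeSpectrum.zeroLocus (R := R) p) :=
    { length := l.length
      toFun := fun k => ⟨(l k).1, hpl.trans (l.monotone (Fin.zero_le k))⟩
      step := l.step }
  exact (Order.LTSeries.length_le_krullDim l').trans (ringKrullDim_quotient p ▸ h p hp)

end KrullDimension

section ModuleDimension

variable {R : Type*} [CommRing R] {M : Type*} [AddCommGroup M] [Module R M]

theorem moduleDim_eq_bot_iff : moduleDim R M = ⊥ ↔ Subsingleton M := by
  rw [moduleDim, ringKrullDim, Order.krullDim_eq_bot_iff, PrimeSpectrum.isEmpty_iff_subsingleton,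
    Ideal.Quotient.subsingleton_iff, Module.annihilator_eq_top_iff]

theorem moduleDim_le_of_surjective {N : Type*} [AddCommGroup N] [Module R N] (f : M →ₗ[R] N)
    (hf : Function.Surjective f) : moduleDim R N ≤ moduleDim R M :=
  ringKrullDim_quotient_le_of_le (LinearMap.annihilator_le_of_surjective f hf)

theorem ringKrullDim_quotient_le_moduleDim {p : Ideal R} (hp : p ∈ associatedPrimes R M) :
    ringKrullDim (R ⧸ p) ≤ moduleDim R M :=
  ringKrullDim_quotient_le_of_le (Submodule.annihilator_top (R := R) (M := M) ▸ hp.annihilator_le)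

theorem moduleDim_le_of_forall_mem_associatedPrimes [IsNoetherianRing R] [Module.Finite R M]
    {c : WithBot ℕ∞} (h : ∀ p ∈ associatedPrimes R M, ringKrullDim (R ⧸ p) ≤ c) :
    moduleDim R M ≤ c :=
  ringKrullDim_quotient_le_of_forall_mem_minimalPrimes _ fun p hp =>
    h p (Module.associatedPrimes.minimalPrimes_annihilator_subset_associatedPrimes R M hp)

end ModuleDimension

section AssociatedPrimes

variable {R : Type*} [CommRing R] {M : Type*} [AddCommGroup M] [Module R M]

theorem associatedPrimes_subset_union_inf (N Q : Submodule R M) :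
    associatedPrimes R N ⊆ associatedPrimes R ↥(N ⊓ Q) ∪ associatedPrimes R (M ⧸ Q) :=
  associatedPrimes.subset_union_of_exact (Submodule.inclusion_injective inf_le_left)
    (g := Q.mkQ ∘ₗ N.subtype) fun x =>
      ⟨fun hx => ⟨⟨x, x.2, (Submodule.Quotient.mk_eq_zero Q).mp hx⟩, rfl⟩,
        by rintro ⟨y, rfl⟩; exact (Submodule.Quotient.mk_eq_zero Q).mpr y.2.2⟩

theorem associatedPrimes_subset_biUnion_of_inf_biInf_eq_bot {ι : Type*} (Q : ι → Submodule R M)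
    {s : Set ι} (hs : s.Finite) {N : Submodule R M} (hN : N ⊓ ⨅ i ∈ s, Q i = ⊥) :
    associatedPrimes R N ⊆ ⋃ i ∈ s, associatedPrimes R (M ⧸ Q i) := by
  induction s, hs using Set.Finite.induction_on generalizing N with
  | empty =>
    obtain rfl : N = ⊥ := by simpa using hN
    simp [associatedPrimes.eq_empty_of_subsingleton]
  | @insert a s _ _ ih =>
    rw [Set.biUnion_insert, Set.union_comm]
    refine (associatedPrimes_subset_union_inf N (Q a)).trans
      (Set.union_subset_union_left _ (ih ?_))
    rwa [inf_assoc, ← iInf_insert]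

variable [IsNoetherianRing R]

theorem IsPrimarySubmodule.ringKrullDim_quotient_le_moduleDim_of_not_le {Q : Submodule R M}
    {p : Ideal R} (hQ : IsPrimarySubmodule Q p) {N : Submodule R M} (hN : ¬ N ≤ Q) :
    ringKrullDim (R ⧸ p) ≤ moduleDim R N := by
  have : Nontrivial (N.map Q.mkQ) := Submodule.nontrivial_iff_ne_bot.mpr fun h =>
    hN (by rwa [← LinearMap.le_ker_iff_map, Submodule.ker_mkQ] at h)
  obtain ⟨q, hq⟩ := associatedPrimes.nonempty R (N.map Q.mkQ)
  have hq' := associatedPrimes.subset_of_injective (N.map Q.mkQ).injective_subtype hq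
  rw [hQ, Set.mem_singleton_iff] at hq'
  subst hq'
  exact (ringKrullDim_quotient_le_moduleDim hq).trans
    (moduleDim_le_of_surjective _ (Q.mkQ.submoduleMap_surjective N))

theorem associatedPrimes_biInf_subset_of_isPrimarySubmodule [Module.Finite R M]
    {Q : Ideal R → Submodule R M} (hQ : ∀ p ∈ associatedPrimes R M, IsPrimarySubmodule (Q p) p)
    (hdecomp : ⨅ p ∈ associatedPrimes R M, Q p = ⊥) (P : Ideal R → Prop) :
    associatedPrimes R ↥(⨅ p ∈ {p ∈ associatedPrimes R M | P p}, Q p) ⊆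
      {p ∈ associatedPrimes R M | ¬ P p} := by
  have hbot : (⨅ p ∈ {p ∈ associatedPrimes R M | P p}, Q p) ⊓
      ⨅ p ∈ {p ∈ associatedPrimes R M | ¬ P p}, Q p = ⊥ := by
    refine eq_bot_iff.mpr (hdecomp ▸ le_iInf₂ fun p hp => ?_)
    by_cases hPp : P p
    · exact inf_le_left.trans (biInf_le _ ⟨hp, hPp⟩)
    · exact inf_le_right.trans (biInf_le _ ⟨hp, hPp⟩)
  refine (associatedPrimes_subset_biUnion_of_inf_biInf_eq_bot Q
    ((associatedPrimes.finite R M).subset (Set.sep_subset _ _)) hbot).trans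
    (Set.iUnion₂_subset fun p hp => ?_)
  rw [hQ p hp.1]
  exact Set.singleton_subset_iff.mpr hp

end AssociatedPrimes

theorem IsDimFiltration.isGreatest {R : Type*} [CommRing R] {M : Type*} [AddCommGroup M]
    [Module R M] {ℓ : ℕ} {D : Fin (ℓ + 1) → Submodule R M} (hD : IsDimFiltration R M ℓ D)
    (i : Fin (ℓ + 1)) :
    IsGreatest {N : Submodule R M | moduleDim R N ≤ moduleDim R (D i)} (D i) := by
  induction i using Fin.cases with
  | zero =>
    rw [hD.1]
    refine ⟨le_refl (moduleDim R (⊥ : Submodule R M)), fun N hN => ?_⟩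
    have hbot : moduleDim R ↥(⊥ : Submodule R M) = ⊥ := moduleDim_eq_bot_iff.mpr inferInstance
    rw [Set.mem_ofPred_eq, hbot, le_bot_iff, moduleDim_eq_bot_iff,
      Submodule.subsingleton_iff_eq_bot] at hN
    exact hN.le
  | succ j => exact hD.2.2.2.1 j

theorem stmt15_general (R : Type*) [CommRing R] [IsNoetherianRing R]
    (M : Type*) [AddCommGroup M] [Module R M] [Module.Finite R M]
    (Mp : Ideal R → Submodule R M)
    (hprimary : ∀ p ∈ associatedPrimes R M, IsPrimarySubmodule (Mp p) p)
    (hdecomp : ⨅ p ∈ associatedPrimes R M, Mp p = ⊥)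
    (ℓ : ℕ) (D : Fin (ℓ + 1) → Submodule R M) (hD : IsDimFiltration R M ℓ D) :
    ∀ i : Fin ℓ, D i.castSucc =
      ⨅ p ∈ {p ∈ associatedPrimes R M |
        moduleDim R ↥(D i.castSucc) < ringKrullDim (R ⧸ p)}, Mp p := by
  intro i
  refine le_antisymm (le_iInf₂ fun p hp => ?_) ((hD.isGreatest i.castSucc).2 ?_)
  · by_contra hle
    exact ((hprimary p hp.1).ringKrullDim_quotient_le_moduleDim_of_not_le hle).not_gt hp.2
  · exact moduleDim_le_of_forall_mem_associatedPrimes fun p hp =>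
      not_lt.mp (associatedPrimes_biInf_subset_of_isPrimarySubmodule hprimary hdecomp _ hp).2

/-- if `0 = ⋂_{p ∈ Ass M} M(p)` is a primary decomposition of `0` in `M`,
then for `i < ℓ` the term `D_i` of the dimension filtration equals
`⋂ {M(p) : p ∈ Ass_R M, dim R/p > d_i}`. -/
theorem stmt15 (R : Type*) [CommRing R] [IsNoetherianRing R]
    (M : Type*) [AddCommGroup M] [Module R M] [Module.Finite R M] [Nontrivial M]
    (Mp : Ideal R → Submodule R M)
    (hprimary : ∀ p ∈ associatedPrimes R M, IsPrimarySubmodule (Mp p) p)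
    (hdecomp : ⨅ p ∈ associatedPrimes R M, Mp p = ⊥)
    (ℓ : ℕ) (D : Fin (ℓ + 1) → Submodule R M) (hD : IsDimFiltration R M ℓ D) :
    ∀ i : Fin ℓ, D i.castSucc =
      ⨅ p ∈ {p ∈ associatedPrimes R M |
        moduleDim R ↥(D i.castSucc) < ringKrullDim (R ⧸ p)}, Mp p :=
  stmt15_general R M Mp hprimary hdecomp ℓ D hD
end
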